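/- arXiv:2106.09291 — 2 statements merged into one kernel-verified Lean document; each statement's English description precedes it below -/
import Mathlib

section
/- Suppose the noise transition matrix T is row-diagonally dominant, i.e., for every class i and every j ≠ i one has T i j < T i i. Then the target concept f* minimizes the expected 0-1 loss on the noisy distribution: for every measurable classifier f : X → Fin c, ν {(x, y) : f* x ≠ y} ≤ ν {(x, y) : f x ≠ y}, where ν is the noisy joint distribution. -/
/-!
Given `x`, the noisy label is `j` with weight `T (fstar x) j`, so predicting `a` at `x` costs the
total weight of the labels other than `a`. That is smallest when `a` carries the largest weight,
which by diagonal dominance is `fstar x`; integrating over `x` gives the claim.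
-/

open MeasureTheory

open scoped ENNReal

theorem ENNReal.sum_erase_le_sum_erase_of_le {ι : Type*} [DecidableEq ι] {s : Finset ι}
    {w : ι → ℝ≥0∞} {a b : ι}
    (ha : a ∈ s) (hb : b ∈ s) (hba : w b ≤ w a) (hwa : w a ≠ ∞) :
    ∑ j ∈ s.erase a, w j ≤ ∑ j ∈ s.erase b, w j := by
  refine (ENNReal.add_le_add_iff_left hwa).1 ?_
  calc w a + ∑ j ∈ s.erase a, w j = w b + ∑ j ∈ s.erase b, w j := by
        rw [Finset.add_sum_erase s w ha, Finset.add_sum_erase s w hb]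
    _ ≤ w a + ∑ j ∈ s.erase b, w j := by gcongr

section

variable {X ι : Type*} [MeasurableSpace X] [MeasurableSpace ι]

theorem measurable_sum_smul_dirac_prodMk [Fintype ι] {w : X → ι → ℝ≥0∞}
    (hw : ∀ j, Measurable (w · j)) :
    Measurable fun x => ∑ j, w x j • Measure.dirac (x, j) := by
  refine Measure.measurable_of_measurable_coe _ fun s hs => ?_
  simp only [Measure.coe_finsetSum, Finset.sum_apply, Measure.smul_apply, smul_eq_mul,
    Measure.dirac_apply' _ hs]
  exact Finset.measurable_sum _ fun j _ =>
    (hw j).mul ((measurable_one.indicator hs).comp measurable_prodMk_right)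

theorem measurableSet_fst_ne_snd [MeasurableEq ι] {g : X → ι} (hg : Measurable g) :
    MeasurableSet {p : X × ι | g p.1 ≠ p.2} :=
  (measurableSet_eq_fun (hg.comp measurable_fst) measurable_snd).compl

theorem sum_smul_dirac_prodMk_apply_ne [Fintype ι] [DecidableEq ι] [MeasurableEq ι]
    {g : X → ι} (hg : Measurable g) (w : ι → ℝ≥0∞) (x : X) :
    (∑ j, w j • Measure.dirac (x, j)) {p : X × ι | g p.1 ≠ p.2}
      = ∑ j ∈ Finset.univ.erase (g x), w j := by
  simp only [Measure.coe_finsetSum, Finset.sum_apply, Measure.smul_apply, smul_eq_mul,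
    Measure.dirac_apply' _ (measurableSet_fst_ne_snd hg)]
  rw [← Finset.filter_ne, Finset.sum_filter]
  refine Finset.sum_congr rfl fun j _ => ?_
  by_cases h : g x = j <;> simp [h]

theorem bind_sum_smul_dirac_prodMk_apply_ne [Fintype ι] [DecidableEq ι] [MeasurableEq ι]
    (μ : Measure X) {w : X → ι → ℝ≥0∞} (hw : ∀ j, Measurable (w · j)) {g : X → ι}
    (hg : Measurable g) :
    μ.bind (fun x => ∑ j, w x j • Measure.dirac (x, j)) {p : X × ι | g p.1 ≠ p.2}
      = ∫⁻ x, ∑ j ∈ Finset.univ.erase (g x), w x j ∂μ := by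
  rw [Measure.bind_apply (measurableSet_fst_ne_snd hg)
    (measurable_sum_smul_dirac_prodMk hw).aemeasurable]
  exact lintegral_congr fun x => sum_smul_dirac_prodMk_apply_ne hg (w x) x

end

theorem target_concept_minimizes_expected_01_loss_general
    {X : Type*} [MeasurableSpace X] (μ : Measure X)
    (c : ℕ)
    (fstar : X → Fin c) (hfstar : Measurable fstar)
    (T : Fin c → Fin c → ℝ)
    (hdom : ∀ i j, j ≠ i → T i j < T i i)
    (ν : Measure (X × Fin c))
    (hν : ν = μ.bind (fun x => ∑ j, ENNReal.ofReal (T (fstar x) j) • Measure.dirac (x, j)))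
    (f : X → Fin c) (hf : Measurable f) :
    ν {p : X × Fin c | fstar p.1 ≠ p.2} ≤ ν {p : X × Fin c | f p.1 ≠ p.2} := by
  have hw : ∀ j, Measurable fun x => ENNReal.ofReal (T (fstar x) j) := fun j =>
    (measurable_of_countable fun i => ENNReal.ofReal (T i j)).comp hfstar
  have hdiag : ∀ i j, T i j ≤ T i i := fun i j =>
    (eq_or_ne j i).elim (fun h => h ▸ le_rfl) fun h => (hdom i j h).le
  rw [hν, bind_sum_smul_dirac_prodMk_apply_ne μ hw hfstar,
    bind_sum_smul_dirac_prodMk_apply_ne μ hw hf]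
  exact lintegral_mono fun x => ENNReal.sum_erase_le_sum_erase_of_le (Finset.mem_univ _)
    (Finset.mem_univ _) (ENNReal.ofReal_le_ofReal (hdiag _ _)) ENNReal.ofReal_ne_top

/-- If the noise transition matrix `T` is row-diagonally dominant,
then the target concept `fstar` minimizes the expected 0-1 loss on the noisy joint
distribution `ν = μ ⊗ κ`, where `κ` sends `x` to `∑ j, T (fstar x) j • δ_j`. -/
theorem target_concept_minimizes_expected_01_loss
    {X : Type*} [MeasurableSpace X] (μ : Measure X) [IsProbabilityMeasure μ]
    (c : ℕ) (hc : 1 ≤ c)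
    (fstar : X → Fin c) (hfstar : Measurable fstar)
    (T : Fin c → Fin c → ℝ)
    (hT0 : ∀ i j, 0 ≤ T i j) (hT1 : ∀ i, ∑ j, T i j = 1)
    (hdom : ∀ i j, j ≠ i → T i j < T i i)
    (ν : Measure (X × Fin c))
    (hν : ν = μ.bind (fun x => ∑ j, ENNReal.ofReal (T (fstar x) j) • Measure.dirac (x, j)))
    (f : X → Fin c) (hf : Measurable f) :
    ν {p : X × Fin c | fstar p.1 ≠ p.2} ≤ ν {p : X × Fin c | f p.1 ≠ p.2} :=
  target_concept_minimizes_expected_01_loss_general μ c fstar hfstar T hdom ν hν f hf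
end

section
/- Let c ≥ 1, f* : X → Fin c a target concept, and T a noise transition matrix satisfying the diagonally-dominant condition: for every i and every j ≠ i, T i i > T i j and T i i > T j i. Let g : X → Fin c → ℝ be a network with strictly positive outputs and |g x k − T (f* x) k| ≤ ε for all x ∈ X and k ∈ Fin c, where 0 ≤ ε and ε < (1/2) · min over i of (T i i − max over j ≠ i of T j i). Then for every ỹ ∈ Fin c and all x₁, x₂ ∈ X with f* x₁ = ỹ and f* x₂ ≠ ỹ, one has −log (g x₁ ỹ) < −log (g x₂ ỹ); that is, among all examples with the same observed label, every correct example has strictly smaller cross-entropy loss than every incorrect one. -/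
/-- If `T` is diagonally dominant, `g` has strictly positive
outputs and is `ε`-close to the Bayes-optimal network, and
`ε < (1/2) * min_i (T i i - max_{j ≠ i} T j i)` (expressed pointwise, equivalently:
`ε < (1/2) * (T i i - T j i)` for every `i` and every `j ≠ i`), then among all
examples with the same observed label, every correct example has strictly smaller
cross-entropy loss than every incorrect one. -/
theorem small_loss_criterion_all_classes
    {X : Type*} (c : ℕ) (hc : 1 ≤ c)
    (fstar : X → Fin c)
    (T : Fin c → Fin c → ℝ)
    (hT0 : ∀ i j, 0 ≤ T i j) (hT1 : ∀ i, ∑ j, T i j = 1)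
    (hdom : ∀ i j, j ≠ i → T i j < T i i ∧ T j i < T i i)
    (g : X → Fin c → ℝ) (hgpos : ∀ x k, 0 < g x k)
    (ε : ℝ) (hε0 : 0 ≤ ε)
    (hclose : ∀ x k, |g x k - T (fstar x) k| ≤ ε)
    (hε : ∀ i j : Fin c, j ≠ i → ε < (1 / 2) * (T i i - T j i)) :
    ∀ (ytil : Fin c) (x₁ x₂ : X), fstar x₁ = ytil → fstar x₂ ≠ ytil →
      -Real.log (g x₁ ytil) < -Real.log (g x₂ ytil) := by
  intro y x1 x2 h1 h2
  have key : g x2 y < g x1 y := by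
    have he := hε y (fstar x2) h2
    have h1c := hclose x1 y
    have h2c := hclose x2 y
    rw [h1] at h1c
    rw [abs_le] at h1c h2c
    linarith [h1c.1, h2c.2]
  have := Real.log_lt_log (hgpos x2 y) key
  linarith
end
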